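/- Let A be a nonnegative n×n matrix with all row sums positive, and let D_r be the diagonal matrix of row sums r_i(A). Then min_i r_i(D_r⁻¹ A D_r) ≥ min_i r_i(A) and max_i r_i(D_r⁻¹ A D_r) ≤ max_i r_i(A), and min_i r_i(D_r⁻¹ A D_r) ≤ ρ(A) ≤ max_i r_i(D_r⁻¹ A D_r). -/

import Mathlib

/-!
The row sums of `D_r⁻¹ A D_r` are the averages of the row sums of `A` weighted by the rows of `A`,
which gives the first two inequalities. Since `D_r⁻¹ A D_r` is similar to `A`, it remains to bound
the spectral radius of a nonnegative matrix by its extreme row sums: from above by the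
`∞`-operator norm, and from below by Gelfand's formula, because the row sums of the `k`-th power
are at least the `k`-th power of the smallest row sum.
-/

open Matrix

noncomputable def specRad {n : ℕ} (A : Matrix (Fin n) (Fin n) ℝ) : ℝ :=
  sSup {r : ℝ | ∃ μ ∈ spectrum ℂ (A.map (Complex.ofReal)), r = ‖μ‖}

open Finset

attribute [local instance] Matrix.linftyOpSeminormedAddCommGroup Matrix.linftyOpNormedRing
  Matrix.linftyOpNormedAlgebra

namespace Matrix

section Order

variable {ι R : Type*} [Fintype ι] [DecidableEq ι] [Semiring R] [PartialOrder R] [IsOrderedRing R]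

theorem pow_le_sum_pow_apply {C : Matrix ι ι R} (hC : ∀ i j, 0 ≤ C i j) {m : R} (hm : 0 ≤ m)
    (h : ∀ i, m ≤ ∑ j, C i j) (k : ℕ) (i : ι) : m ^ k ≤ ∑ j, (C ^ k) i j := by
  induction k generalizing i with
  | zero => simp [one_apply]
  | succ k ih =>
    calc m ^ (k + 1) = m * m ^ k := pow_succ' m k
      _ ≤ (∑ l, C i l) * m ^ k := mul_le_mul_of_nonneg_right (h i) (pow_nonneg hm k)
      _ = ∑ l, C i l * m ^ k := Finset.sum_mul ..
      _ ≤ ∑ l, C i l * ∑ j, (C ^ k) l j :=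
        sum_le_sum fun l _ => mul_le_mul_of_nonneg_left (ih l) (hC i l)
      _ = ∑ j, (C ^ (k + 1)) i j := by
        simp only [pow_succ', mul_apply, Finset.mul_sum]
        exact Finset.sum_comm

end Order

section Field

variable {ι K : Type*} [Fintype ι] [DecidableEq ι] [Field K]

theorem diagonal_inv_mul_mul_diagonal_apply (A : Matrix ι ι K) {d : ι → K} (hd : ∀ i, d i ≠ 0)
    (i j : ι) : ((diagonal d)⁻¹ * A * diagonal d) i j = (d i)⁻¹ * A i j * d j := by
  have hinv : (diagonal d)⁻¹ = diagonal d⁻¹ :=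
    inv_eq_left_inv <| by simp [diagonal_mul_diagonal, hd]
  rw [hinv, mul_diagonal, diagonal_mul, Pi.inv_apply]

theorem sum_diagonal_inv_mul_mul_diagonal_apply_eq_centerMass (A : Matrix ι ι K)
    (hA : ∀ i, ∑ j, A i j ≠ 0) (i : ι) :
    ∑ j, ((diagonal fun i => ∑ j, A i j)⁻¹ * A * diagonal fun i => ∑ j, A i j) i j =
      univ.centerMass (A i) fun i => ∑ j, A i j := by
  simp only [diagonal_inv_mul_mul_diagonal_apply A hA, centerMass, smul_eq_mul, Finset.mul_sum,
    mul_assoc]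

end Field

section Norm

variable {m n α : Type*} [Fintype m] [Fintype n] [SeminormedAddCommGroup α]

theorem sum_norm_le_linfty_opNorm (A : Matrix m n α) (i : m) : ∑ j, ‖A i j‖ ≤ ‖A‖ := by
  rw [linfty_opNorm_def]
  simpa using NNReal.coe_le_coe.2 (Finset.le_sup (f := fun i => ∑ j, ‖A i j‖₊) (mem_univ i))

theorem linfty_opNorm_le_of_forall_sum_norm_le (A : Matrix m n α) {M : ℝ} (hM : 0 ≤ M)
    (h : ∀ i, ∑ j, ‖A i j‖ ≤ M) : ‖A‖ ≤ M := by
  lift M to NNReal using hM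
  rw [linfty_opNorm_def, NNReal.coe_le_coe]
  exact Finset.sup_le fun i _ => by rw [← NNReal.coe_le_coe]; simpa using h i

end Norm

end Matrix

theorem spectrum.ofReal_le_spectralRadius_of_forall_pow_le_norm_pow {A : Type*} [NormedRing A]
    [NormedAlgebra ℂ A] [CompleteSpace A] {a : A} {m : ℝ} (hm : 0 ≤ m)
    (h : ∀ k : ℕ, m ^ k ≤ ‖a ^ k‖) : ENNReal.ofReal m ≤ spectralRadius ℂ a := by
  refine ge_of_tendsto (pow_nnnorm_pow_one_div_tendsto_nhds_spectralRadius a) ?_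
  filter_upwards [Filter.eventually_ne_atTop 0] with k hk
  calc ENNReal.ofReal m = (ENNReal.ofReal (m ^ k)) ^ (1 / (k : ℝ)) := by
        rw [ENNReal.ofReal_pow hm, ← ENNReal.rpow_natCast, ← ENNReal.rpow_mul,
          mul_one_div_cancel (Nat.cast_ne_zero.2 hk), ENNReal.rpow_one]
    _ ≤ (‖a ^ k‖₊ : ENNReal) ^ (1 / (k : ℝ)) := by
        gcongr
        rw [← ENNReal.ofReal_coe_nnreal, coe_nnnorm]
        exact ENNReal.ofReal_le_ofReal (h k)

section specRad

variable {n : ℕ}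

theorem specRad_nonneg (A : Matrix (Fin n) (Fin n) ℝ) : 0 ≤ specRad A :=
  Real.sSup_nonneg <| by rintro _ ⟨μ, -, rfl⟩; exact norm_nonneg μ

theorem norm_le_specRad_of_mem_spectrum {A : Matrix (Fin n) (Fin n) ℝ} {μ : ℂ}
    (hμ : μ ∈ spectrum ℂ (A.map Complex.ofReal)) : ‖μ‖ ≤ specRad A := by
  refine le_csSup ?_ ⟨μ, hμ, rfl⟩
  refine ((A.map Complex.ofReal).finite_spectrum.image (‖·‖)).bddAbove.mono ?_
  rintro _ ⟨ν, hν, rfl⟩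
  exact ⟨ν, hν, rfl⟩

theorem specRad_inv_mul_mul {P : Matrix (Fin n) (Fin n) ℝ} (hP : IsUnit P)
    (A : Matrix (Fin n) (Fin n) ℝ) : specRad (P⁻¹ * A * P) = specRad A := by
  obtain ⟨u, rfl⟩ := hP
  let f := (Complex.ofRealHom.mapMatrix (m := Fin n)).toMonoidHom
  have hmap : ((u : Matrix (Fin n) (Fin n) ℝ)⁻¹ * A * u).map Complex.ofReal =
      ((Units.map f u)⁻¹ : (Matrix (Fin n) (Fin n) ℂ)ˣ) * A.map Complex.ofReal *
        (Units.map f u : Matrix (Fin n) (Fin n) ℂ) := by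
    rw [← coe_units_inv]
    change Matrix.map _ (Complex.ofRealHom : ℝ → ℂ) = _
    rw [Matrix.map_mul, Matrix.map_mul]
    rfl
  unfold specRad
  rw [hmap, spectrum.units_conjugate']

theorem specRad_le_of_forall_sum_norm_le [NeZero n] {A : Matrix (Fin n) (Fin n) ℝ} {M : ℝ}
    (h : ∀ i, ∑ j, ‖A i j‖ ≤ M) : specRad A ≤ M := by
  have hM : 0 ≤ M := (sum_nonneg fun j _ => norm_nonneg (A 0 j)).trans (h 0)
  refine Real.sSup_le ?_ hM
  rintro _ ⟨μ, hμ, rfl⟩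
  refine (spectrum.norm_le_norm_of_mem hμ).trans <|
    linfty_opNorm_le_of_forall_sum_norm_le _ hM fun i => ?_
  simpa [Complex.norm_real] using h i

theorem le_specRad_of_forall_le_sum [NeZero n] {A : Matrix (Fin n) (Fin n) ℝ}
    (hA : ∀ i j, 0 ≤ A i j) {m : ℝ} (h : ∀ i, m ≤ ∑ j, A i j) : m ≤ specRad A := by
  rcases le_or_gt m 0 with hm | hm
  · exact hm.trans (specRad_nonneg A)
  have hpow (k : ℕ) : m ^ k ≤ ‖A.map Complex.ofReal ^ k‖ :=
    calc m ^ k ≤ ∑ j, (A ^ k) 0 j := pow_le_sum_pow_apply hA hm.le h k 0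
      _ ≤ ∑ j, ‖(A ^ k) 0 j‖ := sum_le_sum fun j _ => Real.le_norm_self _
      _ = ∑ j, ‖((A ^ k).map Complex.ofReal) 0 j‖ := by simp [Complex.norm_real]
      _ ≤ ‖(A ^ k).map Complex.ofReal‖ := sum_norm_le_linfty_opNorm _ 0
      _ = ‖A.map Complex.ofReal ^ k‖ := congrArg norm (Matrix.map_pow A Complex.ofRealHom k)
  obtain ⟨z, hz, hz_norm⟩ := spectrum.exists_nnnorm_eq_spectralRadius (A.map Complex.ofReal)
  have hmz : ENNReal.ofReal m ≤ ‖z‖₊ :=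
    hz_norm ▸ spectrum.ofReal_le_spectralRadius_of_forall_pow_le_norm_pow hm.le hpow
  rw [ENNReal.ofReal_le_iff_le_toReal ENNReal.coe_ne_top, ENNReal.coe_toReal, coe_nnnorm] at hmz
  exact hmz.trans (norm_le_specRad_of_mem_spectrum hz)

end specRad

/-- Minc's improvement of the Frobenius row-sum bounds: conjugating `A` by the
diagonal matrix of its row sums sharpens the row-sum bounds on the spectral radius. -/
theorem minc_row_sum_bounds {n : ℕ} (hn : 0 < n)
    (A : Matrix (Fin n) (Fin n) ℝ) (hA : ∀ i j, 0 ≤ A i j)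
    (r : Fin n → ℝ) (hr : ∀ i, r i = ∑ j, A i j) (hrpos : ∀ i, 0 < r i) :
    let B := (Matrix.diagonal r)⁻¹ * A * Matrix.diagonal r
    let ne : (Finset.univ : Finset (Fin n)).Nonempty := Finset.univ_nonempty_iff.mpr ⟨⟨0, hn⟩⟩
    Finset.univ.inf' ne (fun i => ∑ j, A i j) ≤ Finset.univ.inf' ne (fun i => ∑ j, B i j) ∧
    Finset.univ.sup' ne (fun i => ∑ j, B i j) ≤ Finset.univ.sup' ne (fun i => ∑ j, A i j) ∧
    Finset.univ.inf' ne (fun i => ∑ j, B i j) ≤ specRad A ∧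
    specRad A ≤ Finset.univ.sup' ne (fun i => ∑ j, B i j) := by
  intro B ne
  obtain rfl : r = fun i => ∑ j, A i j := funext hr
  have : NeZero n := ⟨hn.ne'⟩
  have hr_ne (i : Fin n) : ∑ j, A i j ≠ 0 := (hrpos i).ne'
  have hB_row (i) : ∑ j, B i j = univ.centerMass (A i) fun i => ∑ j, A i j :=
    sum_diagonal_inv_mul_mul_diagonal_apply_eq_centerMass A hr_ne i
  have hB_nonneg (i j) : 0 ≤ B i j := by
    rw [show B i j = _ from diagonal_inv_mul_mul_diagonal_apply A hr_ne i j]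
    exact mul_nonneg (mul_nonneg (inv_nonneg.2 (hrpos i).le) (hA i j)) (hrpos j).le
  have hB_specRad : specRad B = specRad A :=
    specRad_inv_mul_mul (isUnit_diagonal.2 (Pi.isUnit_iff.2 fun i => (hr_ne i).isUnit)) A
  refine ⟨le_inf' _ _ fun i _ => ?_, sup'_le _ _ fun i _ => ?_, ?_, ?_⟩
  · exact hB_row i ▸ inf_le_centerMass (fun j _ => hA i j) (hrpos i)
  · exact hB_row i ▸ centerMass_le_sup (fun j _ => hA i j) (hrpos i)
  · exact hB_specRad ▸ le_specRad_of_forall_le_sum hB_nonneg fun i => inf'_le _ (mem_univ i)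
  · refine hB_specRad ▸ specRad_le_of_forall_sum_norm_le fun i => ?_
    simp only [Real.norm_of_nonneg (hB_nonneg i _)]
    exact le_sup' (fun i => ∑ j, B i j) (mem_univ i)
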